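/- Let S = ⟨a_1,…,a_n⟩ ⊆ ℕ be a numerical semigroup with Frobenius number F(S). Then: (1) if w ∈ L_S and z is an integer with z > w + F(S), then z ∈ L_S; (2) if L_S ≠ ∅, then L_S ∪ {0} is a numerical semigroup. -/

import Mathlib

/-!
If `λ ≠ ν` are factorizations of `w` of the same length, then `λ + μ ≠ ν + μ` are
factorizations of `w + s` of the same length for every factorization `μ` of `s ∈ S`; hence
`L_S + S ⊆ L_S`. Both parts follow, since every integer `z > w + F(S)` is `w` plus an element
of `S`.
-/

/-- The `S`-degree of an exponent vector. -/
def degS {n : ℕ} {G : Type*} [AddCommMonoid G] (a : Fin n → G) (lam : Fin n → ℕ) : G :=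
  ∑ i, lam i • a i

/-- The set of elements of `S = ⟨a_1,…,a_n⟩` having at least two different factorizations
of the same length. -/
def LSet {n : ℕ} {G : Type*} [AddCommMonoid G] (a : Fin n → G) : Set G :=
  {x | ∃ lam nu : Fin n → ℕ, lam ≠ nu ∧ degS a lam = x ∧ degS a nu = x ∧
    ∑ i, lam i = ∑ i, nu i}

section AddCommMonoid

variable {n : ℕ} {G : Type*} [AddCommMonoid G]

lemma degS_add (a : Fin n → G) (lam mu : Fin n → ℕ) :
    degS a (lam + mu) = degS a lam + degS a mu := by
  simp only [degS, Pi.add_apply, add_smul, Finset.sum_add_distrib]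

lemma mem_closure_range_iff_exists_degS {a : Fin n → G} {x : G} :
    x ∈ AddSubmonoid.closure (Set.range a) ↔ ∃ mu, degS a mu = x := by
  simp only [AddSubmonoid.mem_closure_range_iff_of_fintype, degS, eq_comm]

lemma LSet_subset_closure (a : Fin n → G) :
    LSet a ⊆ AddSubmonoid.closure (Set.range a) := by
  rintro x ⟨lam, -, -, hlam, -, -⟩
  exact mem_closure_range_iff_exists_degS.2 ⟨lam, hlam⟩

lemma add_mem_LSet {a : Fin n → G} {w s : G} (hw : w ∈ LSet a)
    (hs : s ∈ AddSubmonoid.closure (Set.range a)) : w + s ∈ LSet a := by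
  obtain ⟨lam, nu, hne, hlam, hnu, hlen⟩ := hw
  obtain ⟨mu, rfl⟩ := mem_closure_range_iff_exists_degS.1 hs
  refine ⟨lam + mu, nu + mu, fun h => hne (add_right_cancel h),
    by rw [degS_add, hlam], by rw [degS_add, hnu], ?_⟩
  simp only [Pi.add_apply, Finset.sum_add_distrib, hlen]

lemma add_mem_LSet_union_zero {a : Fin n → G} {x y : G} (hx : x ∈ LSet a ∪ {0})
    (hy : y ∈ LSet a ∪ {0}) : x + y ∈ LSet a ∪ {0} := by
  rcases hx with hx | rfl
  · rcases hy with hy | rfl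
    · exact Or.inl (add_mem_LSet hx (LSet_subset_closure a hy))
    · exact Or.inl (by simpa using hx)
  · simpa using hy

def LSetAddSubmonoid (a : Fin n → G) : AddSubmonoid G where
  carrier := LSet a ∪ {0}
  zero_mem' := Or.inr rfl
  add_mem' := add_mem_LSet_union_zero

end AddCommMonoid

section Nat

variable {n : ℕ} {a : Fin n → ℕ} {F : ℤ}

lemma natCast_mem_image_LSet_of_add_lt
    (hF : F ∈ upperBounds {z : ℤ | z ∉
      ((fun k : ℕ => (k : ℤ)) '' (AddSubmonoid.closure (Set.range a) : Set ℕ))})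
    {w : ℕ} (hw : w ∈ LSet a) {z : ℤ} (hz : (w : ℤ) + F < z) :
    z ∈ (fun k : ℕ => (k : ℤ)) '' LSet a := by
  have hzw : z - w ∈ ((fun k : ℕ => (k : ℤ)) '' (AddSubmonoid.closure (Set.range a) : Set ℕ)) :=
    by_contra fun h => (hF h).not_gt (by linarith)
  obtain ⟨s, hs, hsz⟩ := hzw
  exact ⟨w + s, add_mem_LSet hw hs, by push_cast; linarith⟩

lemma finite_compl_LSetAddSubmonoid
    (hF : F ∈ upperBounds {z : ℤ | z ∉
      ((fun k : ℕ => (k : ℤ)) '' (AddSubmonoid.closure (Set.range a) : Set ℕ))})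
    {w : ℕ} (hw : w ∈ LSet a) : {x : ℕ | x ∉ LSetAddSubmonoid a}.Finite := by
  refine (Set.finite_Iic ((w : ℤ) + F).toNat).subset fun x hx => ?_
  by_contra hxw
  have hlt : (w : ℤ) + F < x := by simp only [Set.mem_Iic, not_le] at hxw; omega
  obtain ⟨y, hy, hyx⟩ := natCast_mem_image_LSet_of_add_lt hF hw hlt
  exact hx (Or.inl (Nat.cast_inj.1 hyx ▸ hy))

end Nat

theorem LSet_numerical_general
    {n : ℕ} (a : Fin n → ℕ)
    -- `F` is the Frobenius number: the largest integer not in `S`: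
    (F : ℤ)
    (hF : IsGreatest {z : ℤ | z ∉
      ((fun k : ℕ => (k : ℤ)) '' (AddSubmonoid.closure (Set.range a) : Set ℕ))} F) :
    ((∀ w ∈ LSet a, ∀ z : ℤ, (w : ℤ) + F < z →
        z ∈ (fun k : ℕ => (k : ℤ)) '' LSet a)
    ∧ (LSet a ≠ ∅ →
        ∃ M : AddSubmonoid ℕ, (M : Set ℕ) = LSet a ∪ {0} ∧ {x : ℕ | x ∉ M}.Finite)) := by
  refine ⟨fun w hw z hz => natCast_mem_image_LSet_of_add_lt hF.2 hw hz, fun hne => ?_⟩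
  obtain ⟨w, hw⟩ := Set.nonempty_iff_ne_empty.2 hne
  exact ⟨LSetAddSubmonoid a, rfl, finite_compl_LSetAddSubmonoid hF.2 hw⟩

/-- **Corollary.** Let `S = ⟨a_1,…,a_n⟩ ⊆ ℕ` be a numerical semigroup with Frobenius
number `F(S)` (the largest integer not in `S`).
(1) If `w ∈ L_S` and `z` is an integer with `z > w + F(S)`, then `z ∈ L_S`;
(2) if `L_S ≠ ∅`, then `L_S ∪ {0}` is a numerical semigroup. -/
theorem LSet_numerical
    {n : ℕ} (a : Fin n → ℕ)
    -- `S = ⟨a_1,…,a_n⟩` is a numerical semigroup, i.e. `ℕ \ S` is finite: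
    (hfin : {x : ℕ | x ∉ AddSubmonoid.closure (Set.range a)}.Finite)
    -- `F` is the Frobenius number: the largest integer not in `S`:
    (F : ℤ)
    (hF : IsGreatest {z : ℤ | z ∉
      ((fun k : ℕ => (k : ℤ)) '' (AddSubmonoid.closure (Set.range a) : Set ℕ))} F) :
    ((∀ w ∈ LSet a, ∀ z : ℤ, (w : ℤ) + F < z →
        z ∈ (fun k : ℕ => (k : ℤ)) '' LSet a)
    ∧ (LSet a ≠ ∅ →
        ∃ M : AddSubmonoid ℕ, (M : Set ℕ) = LSet a ∪ {0} ∧ {x : ℕ | x ∉ M}.Finite)) :=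
  LSet_numerical_general a F hF
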